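/- arXiv:2104.09449 — 2 statements merged into one kernel-verified Lean document; each statement's English description precedes it below -/
import Mathlib

section
/- If a primitive Pythagorean triple (a,b,c) satisfies c - b = d, then either d = s^2 for some odd positive integer s, or d = 2*s^2 for some positive integer s. -/
/-!
Put `d = c - b`. Then `d * (d + 2 * b) = a ^ 2`, and primitivity makes `b` coprime to `c`,
hence to `d`. If `d` is odd, `d` and `d + 2 * b` are coprime, so `d` is a square. If `d = 2 * k`,
then `a` is even and `k * (k + b) = (a / 2) ^ 2` with `k` coprime to `b`, so `k` is a square.
-/

theorem Nat.coprime_of_sq_add_sq_eq_sq {a b c : ℕ} (h : a ^ 2 + b ^ 2 = c ^ 2)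
    (hgcd : Nat.gcd a (Nat.gcd b c) = 1) : Nat.Coprime b c := by
  have hsq : Nat.gcd b c ^ 2 ∣ a ^ 2 := by
    rw [← Nat.dvd_add_left (pow_dvd_pow_of_dvd (Nat.gcd_dvd_left b c) 2), h]
    exact pow_dvd_pow_of_dvd (Nat.gcd_dvd_right b c) 2
  have ha : Nat.gcd b c ∣ a := (Nat.pow_dvd_pow_iff two_ne_zero).mp hsq
  exact Nat.eq_one_of_dvd_one (hgcd ▸ Nat.dvd_gcd ha dvd_rfl)

theorem Nat.exists_eq_sq_of_mul_add_eq_sq {x y m : ℕ} (hxy : x.Coprime y)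
    (h : x * (x + y) = m ^ 2) : ∃ s, x = s ^ 2 :=
  exists_eq_pow_of_mul_eq_pow (Nat.isUnit_iff.mpr (Nat.coprime_self_add_right.mpr hxy)) h

theorem Nat.exists_odd_eq_sq_of_mul_add_two_mul_eq_sq {d b a : ℕ} (hd : Odd d)
    (hdb : d.Coprime b) (h : d * (d + 2 * b) = a ^ 2) : ∃ s, Odd s ∧ d = s ^ 2 := by
  have hd2b : d.Coprime (2 * b) := Nat.Coprime.mul_right (Nat.coprime_two_right.mpr hd) hdb
  obtain ⟨s, rfl⟩ := Nat.exists_eq_sq_of_mul_add_eq_sq hd2b h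
  exact ⟨s, (Nat.odd_pow_iff two_ne_zero).mp hd, rfl⟩

theorem Nat.exists_eq_sq_of_two_mul_mul_add_two_mul_eq_sq {k b a : ℕ}
    (hkb : (2 * k).Coprime b) (h : 2 * k * (2 * k + 2 * b) = a ^ 2) : ∃ s, k = s ^ 2 := by
  obtain ⟨a', rfl⟩ : Even a := by
    rw [← Nat.even_pow' two_ne_zero, ← h]
    exact (even_two_mul k).mul_right _
  have h' : k * (k + b) = a' ^ 2 := by nlinarith
  exact Nat.exists_eq_sq_of_mul_add_eq_sq (hkb.coprime_dvd_left (dvd_mul_left k 2)) h'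

theorem stmt_12_general (a b c d : ℕ)
    (hpyth : a ^ 2 + b ^ 2 = c ^ 2) (hbc : b < c)
    (hgcd : Nat.gcd a (Nat.gcd b c) = 1) (hd : c - b = d) :
    (∃ s : ℕ, 0 < s ∧ Odd s ∧ d = s ^ 2) ∨ (∃ s : ℕ, 0 < s ∧ d = 2 * s ^ 2) := by
  have hcop : b.Coprime c := Nat.coprime_of_sq_add_sq_eq_sq hpyth hgcd
  subst hd
  obtain ⟨d, rfl⟩ := Nat.exists_eq_add_of_le hbc.le
  rw [Nat.add_sub_cancel_left]
  have hdb : d.Coprime b := (Nat.coprime_self_add_right.mp hcop).symm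
  have hprod : d * (d + 2 * b) = a ^ 2 := by linarith
  rcases Nat.even_or_odd' d with ⟨k, rfl | rfl⟩
  · obtain ⟨s, rfl⟩ := Nat.exists_eq_sq_of_two_mul_mul_add_two_mul_eq_sq hdb hprod
    exact Or.inr ⟨s, Nat.pos_of_ne_zero fun hs ↦ by simp [hs] at hbc, rfl⟩
  · obtain ⟨s, hs, hds⟩ :=
      Nat.exists_odd_eq_sq_of_mul_add_two_mul_eq_sq (odd_two_mul_add_one k) hdb hprod
    exact Or.inl ⟨s, hs.pos, hs, hds⟩

theorem stmt_12 (a b c d : ℕ) (ha : 0 < a) (hb : 0 < b) (hc : 0 < c)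
    (hpyth : a ^ 2 + b ^ 2 = c ^ 2) (hbc : b < c)
    (hgcd : Nat.gcd a (Nat.gcd b c) = 1) (hd : c - b = d) :
    (∃ s : ℕ, 0 < s ∧ Odd s ∧ d = s ^ 2) ∨ (∃ s : ℕ, 0 < s ∧ d = 2 * s ^ 2) :=
  stmt_12_general a b c d hpyth hbc hgcd hd
end

section
/- If (a,b,c) is a primitive Pythagorean triple with a odd and c - b = d, then d = s^2 for some odd s dividing a, and the point (a,b) lies on the parabola y = -x^2/(2*a1^2) + a1^2/2 where a1 = a/s, i.e., b = -a^2/(2*a1^2) + a1^2/2. -/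
/-!
Write `c = b + d`. Then `a² = c² - b² = d (d + 2b)`, and the two factors are coprime: a common
divisor is odd (it divides `a²`) and so divides `b` and `c`, which are coprime for a primitive
triple. Hence `d = s²` and `d + 2b = a₁²` with `a = s a₁`, and eliminating `d` from
`s² + 2b = a₁²` gives `2 a₁² b = a₁⁴ - s² a₁² = a₁⁴ - a²`.
-/

namespace Nat

theorem coprime_of_sq_add_sq_eq_sq_s19 {a b c : ℕ} (h : a ^ 2 + b ^ 2 = c ^ 2)
    (hgcd : gcd a (gcd b c) = 1) : Coprime b c := by
  have hsq : gcd b c ^ 2 ∣ a ^ 2 := by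
    rw [show a ^ 2 = c ^ 2 - b ^ 2 by omega]
    exact Nat.dvd_sub (pow_dvd_pow_of_dvd (gcd_dvd_right b c) 2)
      (pow_dvd_pow_of_dvd (gcd_dvd_left b c) 2)
  have hdvd : gcd b c ∣ a := (Nat.pow_dvd_pow_iff two_ne_zero).mp hsq
  exact Nat.dvd_one.mp (hgcd ▸ Nat.dvd_gcd hdvd dvd_rfl)

theorem Coprime.self_add_two_mul {b e : ℕ} (h : Coprime b (b + e)) (he : Odd e) :
    Coprime e (e + 2 * b) :=
  coprime_self_add_right.mpr <|
    Coprime.mul_right he.coprime_two_right (coprime_self_add_right.mp h).symm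

theorem Coprime.exists_sq_of_mul_eq_sq {m n a : ℕ} (hmn : Coprime m n) (h : m * n = a ^ 2) :
    ∃ s t, m = s ^ 2 ∧ n = t ^ 2 ∧ a = s * t := by
  obtain ⟨s, rfl⟩ := exists_eq_pow_of_mul_eq_pow (Nat.isUnit_iff.mpr hmn) h
  obtain ⟨t, rfl⟩ := exists_eq_pow_of_mul_eq_pow (Nat.isUnit_iff.mpr hmn.symm)
    ((mul_comm _ _).trans h)
  refine ⟨s, t, rfl, rfl, Nat.pow_left_injective two_ne_zero ?_⟩
  simp only [← h, mul_pow]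

end Nat

theorem stmt_19_general (a b c d : ℕ)
    (hpyth : a ^ 2 + b ^ 2 = c ^ 2) (hbc : b < c)
    (hgcd : Nat.gcd a (Nat.gcd b c) = 1) (haodd : Odd a) (hd : d = c - b) :
    ∃ s a1 : ℕ, Odd s ∧ a = s * a1 ∧ d = s ^ 2 ∧
      2 * (a1 : ℤ) ^ 2 * (b : ℤ) = (a1 : ℤ) ^ 4 - (a : ℤ) ^ 2 := by
  have hcop := Nat.coprime_of_sq_add_sq_eq_sq_s19 hpyth hgcd
  obtain rfl : c = b + d := by omega
  have hfactor : d * (d + 2 * b) = a ^ 2 := by nlinarith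
  have hdodd : Odd d := (Nat.odd_mul.mp (hfactor ▸ haodd.pow)).1
  obtain ⟨s, a1, rfl, hsum, rfl⟩ := (hcop.self_add_two_mul hdodd).exists_sq_of_mul_eq_sq hfactor
  refine ⟨s, a1, (Nat.odd_pow_iff two_ne_zero).mp hdodd, rfl, rfl, ?_⟩
  have hsumZ : (s : ℤ) ^ 2 + 2 * b = a1 ^ 2 := by exact_mod_cast hsum
  push_cast
  linear_combination (a1 : ℤ) ^ 2 * hsumZ

theorem stmt_19 (a b c d : ℕ) (ha : 0 < a) (hb : 0 < b) (hc : 0 < c)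
    (hpyth : a ^ 2 + b ^ 2 = c ^ 2) (hbc : b < c)
    (hgcd : Nat.gcd a (Nat.gcd b c) = 1) (haodd : Odd a) (hd : d = c - b) :
    ∃ s a1 : ℕ, Odd s ∧ a = s * a1 ∧ d = s ^ 2 ∧
      2 * (a1 : ℤ) ^ 2 * (b : ℤ) = (a1 : ℤ) ^ 4 - (a : ℤ) ^ 2 :=
  stmt_19_general a b c d hpyth hbc hgcd haodd hd
end
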